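/- Let G be a finite simple graph that is {claw, K1 ∪ K3}-free and such that both G and its complement Ḡ are connected. Then G has no homogeneous set; that is, there is no set U of vertices with 2 ≤ |U| ≤ |V(G)| − 1 such that every vertex outside U is adjacent either to all vertices of U or to no vertex of U. -/

import Mathlib

open SimpleGraph

/-- `G` is `H`-free: no induced subgraph of `G` is isomorphic to `H`
(an induced copy is a graph embedding). -/
def InducedFree {α β : Type*} (H : SimpleGraph β) (G : SimpleGraph α) : Prop :=
  ¬ Nonempty (H ↪g G)

/-- The claw `K_{1,3}`: center `0` with leaves `1,2,3`. -/
def claw : SimpleGraph (Fin 4) := fromEdgeSet {s(0,1), s(0,2), s(0,3)}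

/-- `K1 ∪ K3`: a triangle `1,2,3` together with the isolated vertex `0`
(the complement of the claw). -/
def K1uK3 : SimpleGraph (Fin 4) := fromEdgeSet {s(1,2), s(1,3), s(2,3)}

/-- `U` is a homogeneous set of `G`: `2 ≤ |U| ≤ |V| − 1` and every vertex
outside `U` is adjacent to all of `U` or to none of `U`. -/
def IsHomogeneousSet {V : Type*} [Fintype V] (G : SimpleGraph V) (U : Set V) : Prop :=
  2 ≤ U.ncard ∧ U.ncard ≤ Fintype.card V - 1 ∧
    ∀ v ∉ U, (∀ u ∈ U, G.Adj v u) ∨ (∀ u ∈ U, ¬ G.Adj v u)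

/-!
Let `U` be homogeneous and `u, v ∈ U` distinct; replacing `G` by its complement (which swaps
the claw and `K1 ∪ K3` and keeps `U` homogeneous) we may assume `u ~ v`. Connectivity of `G`
gives a vertex outside `U` complete to `U`; let `A` be the set of all such vertices. A vertex
outside `U` that is not in `A` is anticomplete to `U`, so it is adjacent to every `a ∈ A`, as
otherwise it forms a `K1 ∪ K3` with the triangle `a u v`. Hence no edge of `Gᶜ` leaves `A`,
contradicting the connectivity of `Gᶜ`.
-/

section

variable {V : Type*}

lemma compl_claw : clawᶜ = K1uK3 := by
  ext i j
  fin_cases i <;> fin_cases j <;> simp [claw, K1uK3]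

lemma SimpleGraph.Preconnected.exists_adj_of_mem_of_notMem {G : SimpleGraph V}
    (hG : G.Preconnected) {S : Set V} {x y : V} (hx : x ∈ S) (hy : y ∉ S) :
    ∃ a ∈ S, ∃ b ∉ S, G.Adj a b := by
  obtain ⟨p⟩ := hG x y
  obtain ⟨d, -, hd₁, hd₂⟩ := p.exists_boundary_dart S hx hy
  exact ⟨d.fst, hd₁, d.snd, hd₂, d.adj⟩

namespace InducedFree

variable {α β : Type*} {H : SimpleGraph β} {G : SimpleGraph α}

lemma compl (h : InducedFree H G) : InducedFree Hᶜ Gᶜ :=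
  fun ⟨f⟩ ↦ h ⟨Embedding.complEquiv.symm f⟩

lemma adj_of_triangle (hK : InducedFree K1uK3 G) {a u v b : α}
    (hau : G.Adj a u) (hav : G.Adj a v) (huv : G.Adj u v)
    (hab : a ≠ b) (hub : u ≠ b) (hvb : v ≠ b) (nub : ¬ G.Adj u b) (nvb : ¬ G.Adj v b) :
    G.Adj a b := by
  by_contra nab
  refine hK ⟨⟨⟨![b, a, u, v], fun i j hij ↦ ?_⟩, fun {i j} ↦ ?_⟩⟩
  · have := huv.ne
    fin_cases i <;> fin_cases j <;> simp_all [hau.ne, hav.ne, eq_comm]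
  · change G.Adj (![b, a, u, v] i) (![b, a, u, v] j) ↔ K1uK3.Adj i j
    fin_cases i <;> fin_cases j <;> simp_all [K1uK3, G.adj_comm]

end InducedFree

namespace IsHomogeneousSet

variable [Fintype V] {G : SimpleGraph V} {U : Set V}

lemma compl (hU : IsHomogeneousSet G U) : IsHomogeneousSet Gᶜ U := by
  refine ⟨hU.1, hU.2.1, fun v hv ↦ ?_⟩
  have hne : ∀ u ∈ U, v ≠ u := fun u hu h ↦ hv (h ▸ hu)
  rcases hU.2.2 v hv with h | h
  · exact .inr fun u hu hc ↦ hc.2 (h u hu)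
  · exact .inl fun u hu ↦ ⟨hne u hu, h u hu⟩

lemma exists_ne (hU : IsHomogeneousSet G U) : ∃ u ∈ U, ∃ v ∈ U, u ≠ v := by
  obtain ⟨u, v, hu, hv, huv⟩ := (Set.one_lt_ncard_iff U.toFinite).1 (by linarith [hU.1])
  exact ⟨u, hu, v, hv, huv⟩

lemma exists_notMem (hU : IsHomogeneousSet G U) : ∃ w, w ∉ U := by
  by_contra! h
  obtain ⟨h2, hle, -⟩ := hU
  rw [Set.eq_univ_of_forall h, Set.ncard_univ, Nat.card_eq_fintype_card] at h2 hle
  omega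

lemma not_adj (hU : IsHomogeneousSet G U) (hG : G.Preconnected) (hGc : Gᶜ.Preconnected)
    (hK : InducedFree K1uK3 G) {u v : V} (hu : u ∈ U) (hv : v ∈ U) : ¬ G.Adj u v := by
  intro huv
  set A := {y | y ∉ U ∧ ∀ w ∈ U, G.Adj y w}
  obtain ⟨w, hw⟩ := hU.exists_notMem
  obtain ⟨x, hx, y, hy, hxy⟩ := hG.exists_adj_of_mem_of_notMem hu hw
  have hyA : y ∈ A :=
    ⟨hy, (hU.2.2 y hy).resolve_right fun h ↦ h x hx hxy.symm⟩
  obtain ⟨a, ⟨haU, ha⟩, b, hbA, hab⟩ :=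
    hGc.exists_adj_of_mem_of_notMem (S := A) hyA fun h ↦ h.1 hu
  by_cases hbU : b ∈ U
  · exact hab.2 (ha b hbU)
  have hb : ∀ w ∈ U, ¬ G.Adj b w :=
    (hU.2.2 b hbU).resolve_left fun h ↦ hbA ⟨hbU, h⟩
  have hne : ∀ w ∈ U, w ≠ b := fun w hw h ↦ hbU (h ▸ hw)
  exact hab.2 <| hK.adj_of_triangle (ha u hu) (ha v hv) huv hab.1 (hne u hu) (hne v hv)
    (fun h ↦ hb u hu h.symm) (fun h ↦ hb v hv h.symm)

end IsHomogeneousSet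

end

theorem claw_coclaw_free_no_homogeneous {V : Type*} [Fintype V]
    (G : SimpleGraph V) (hconn : G.Connected) (hcoconn : Gᶜ.Connected)
    (hclaw : InducedFree claw G) (hK1uK3 : InducedFree K1uK3 G) :
    ¬ ∃ U : Set V, IsHomogeneousSet G U := by
  rintro ⟨U, hU⟩
  obtain ⟨u, hu, v, hv, huv⟩ := hU.exists_ne
  by_cases hadj : G.Adj u v
  · exact hU.not_adj hconn.preconnected hcoconn.preconnected hK1uK3 hu hv hadj
  · have hK : InducedFree K1uK3 Gᶜ := compl_claw ▸ hclaw.compl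
    have hGcc : Gᶜᶜ.Preconnected := (compl_compl G).symm ▸ hconn.preconnected
    exact hU.compl.not_adj hcoconn.preconnected hGcc hK hu hv ⟨huv, hadj⟩
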